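/- arXiv:2005.02857 — 3 statements merged into one kernel-verified Lean document; each statement's English description precedes it below -/
import Mathlib

section
/- Let ε ∈ (0,1/4), δ_ε = |ln ε|^{-1/4}, and η_ε as in the definition of the logarithmic cutoff profile (with δ_ε replaced by 1 by scaling, i.e., η_ε(t) = -(1/|ln ε|)·ln √((t-ε)² + ε²) for t ∈ (ε, ε+√(1-ε²)), η_ε = 1 on [0,ε], η_ε = 0 beyond). Then there is a universal constant C > 0 such that π·∫_0^1 t·|η_ε'(t)|² dt ≤ π/|ln ε| + C/|ln ε|^{3/2}. -/
/-!
On `(ε, 1]` the integrand is `|ln ε|⁻²` times `t (t-ε)² / ((t-ε)² + ε²)²`, which is at most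
`t / ((t-ε)² + ε²)`. The latter has the explicit primitive `½ ln((t-ε)² + ε²) + arctan((t-ε)/ε)`,
so its integral over `[ε, 1]` is at most `|ln ε| + π/2`. Hence the left side is at most
`π/|ln ε| + (π²/2)/|ln ε|²`, and `|ln ε| > 1` for `ε < 1/4`.
-/

open Real intervalIntegral Set

/-- The derivative `η_ε'` of the logarithmic cutoff profile. -/
noncomputable def logCutoffDeriv (ε t : ℝ) : ℝ :=
  if ε < t ∧ t < ε + √(1 - ε ^ 2) then -(1 / |log ε|) * ((t - ε) / ((t - ε) ^ 2 + ε ^ 2))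
  else 0

lemma one_lt_abs_log_of_lt_quarter {ε : ℝ} (hε0 : 0 < ε) (hε : ε < 1 / 4) : 1 < |log ε| := by
  have hlog : log ε < log (1 / 4) := log_lt_log hε0 hε
  have hquarter : log (1 / 4 : ℝ) = -(2 * log 2) := by
    rw [one_div, log_inv, show (4 : ℝ) = 2 ^ 2 by norm_num, log_pow]
    push_cast
    ring
  rw [abs_of_neg (by linarith [log_two_gt_d9])]
  linarith [log_two_gt_d9]

lemma mul_div_sq_le_div {t a D : ℝ} (ht : 0 ≤ t) (ha : a ^ 2 ≤ D) : t * (a / D) ^ 2 ≤ t / D := by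
  rcases (le_trans (sq_nonneg a) ha).eq_or_lt with rfl | hD
  · simp
  rw [div_pow, sq D, ← div_div, mul_div_assoc', div_le_div_iff_of_pos_right hD]
  exact mul_le_of_le_one_right ht ((div_le_one hD).mpr ha)

section Kernel

variable {ε : ℝ}

lemma continuous_sub_div_sq_add_sq (hε : ε ≠ 0) :
    Continuous fun t => (t - ε) / ((t - ε) ^ 2 + ε ^ 2) :=
  (continuous_id.sub continuous_const).div (by fun_prop) fun t => by positivity

lemma hasDerivAt_log_add_arctan (hε : ε ≠ 0) (t : ℝ) :
    HasDerivAt (fun t => log ((t - ε) ^ 2 + ε ^ 2) / 2 + arctan ((t - ε) / ε))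
      (t / ((t - ε) ^ 2 + ε ^ 2)) t := by
  have hD : HasDerivAt (fun t => (t - ε) ^ 2 + ε ^ 2) (2 * (t - ε)) t := by
    simpa using (((hasDerivAt_id t).sub_const ε).pow 2).add_const (ε ^ 2)
  have hlin : HasDerivAt (fun t => (t - ε) / ε) (1 / ε) t := by
    simpa using ((hasDerivAt_id t).sub_const ε).div_const ε
  refine (((hD.log (by positivity)).div_const 2).add
    ((hasDerivAt_arctan _).comp t hlin)).congr_deriv ?_
  field_simp
  ring

lemma integral_div_sq_add_sq_le (hε0 : 0 < ε) (hε1 : ε ≤ 1) :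
    ∫ t in ε..1, t / ((t - ε) ^ 2 + ε ^ 2) ≤ |log ε| + π / 2 := by
  have hcont : Continuous fun t => t / ((t - ε) ^ 2 + ε ^ 2) :=
    continuous_id.div (by fun_prop) fun t => by positivity
  rw [integral_eq_sub_of_hasDerivAt (fun t _ => hasDerivAt_log_add_arctan hε0.ne' t)
    (hcont.intervalIntegrable _ _)]
  have hlog_one : log ((1 - ε) ^ 2 + ε ^ 2) ≤ 0 := log_nonpos (by positivity) (by nlinarith)
  have hlog_eps : log (ε ^ 2) / 2 = -|log ε| := by
    rw [abs_of_nonpos (log_nonpos hε0.le hε1), log_pow]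
    ring
  have harctan := arctan_lt_pi_div_two ((1 - ε) / ε)
  simp only [sub_self, ne_eq, OfNat.ofNat_ne_zero, not_false_eq_true, zero_pow, zero_add,
    zero_div, arctan_zero, add_zero, hlog_eps]
  linarith

lemma integral_mul_div_sq_add_sq_sq_le (hε0 : 0 < ε) (hε1 : ε ≤ 1) :
    ∫ t in ε..1, t * ((t - ε) / ((t - ε) ^ 2 + ε ^ 2)) ^ 2 ≤ |log ε| + π / 2 := by
  refine le_trans (integral_mono_on hε1 (Continuous.intervalIntegrable ?_ _ _)
    (Continuous.intervalIntegrable ?_ _ _) fun t ht => ?_) (integral_div_sq_add_sq_le hε0 hε1)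
  · exact continuous_id.mul ((continuous_sub_div_sq_add_sq hε0.ne').pow 2)
  · exact continuous_id.div (by fun_prop) fun t => by positivity
  · exact mul_div_sq_le_div (hε0.le.trans ht.1) (le_add_of_nonneg_right (sq_nonneg ε))

end Kernel

lemma integral_mul_logCutoffDeriv_sq {ε : ℝ} (hε0 : 0 < ε) (hε1 : ε < 1) :
    ∫ t in (0 : ℝ)..1, t * logCutoffDeriv ε t ^ 2 =
      (∫ t in ε..1, t * ((t - ε) / ((t - ε) ^ 2 + ε ^ 2)) ^ 2) / |log ε| ^ 2 := by
  set f := fun t => t * ((t - ε) / ((t - ε) ^ 2 + ε ^ 2)) ^ 2 / |log ε| ^ 2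
  have hvanish : EqOn (fun t => t * logCutoffDeriv ε t ^ 2) 0 (uIcc 0 ε) := by
    intro t ht
    rw [uIcc_of_le hε0.le] at ht
    simp [logCutoffDeriv, not_lt.mpr ht.2]
  have hsupport : 1 < ε + √(1 - ε ^ 2) := by
    have : 1 - ε < √(1 - ε ^ 2) := (lt_sqrt (by linarith)).mpr (by nlinarith)
    linarith
  have hexplicit : EqOn (fun t => t * logCutoffDeriv ε t ^ 2) f (uIcc ε 1) := by
    intro t ht
    rw [uIcc_of_le hε1.le] at ht
    rcases ht.1.lt_or_eq with hlt | rfl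
    · have hin : ε < t ∧ t < ε + √(1 - ε ^ 2) := ⟨hlt, ht.2.trans_lt hsupport⟩
      simp only [f, logCutoffDeriv, if_pos hin]
      ring
    · simp [f, logCutoffDeriv]
  have hf : Continuous f :=
    (continuous_id.mul ((continuous_sub_div_sq_add_sq hε0.ne').pow 2)).div_const _
  rw [← integral_add_adjacent_intervals (b := ε)
      ((intervalIntegrable_const (c := (0 : ℝ))).congr
        fun t ht => (hvanish (uIoc_subset_uIcc ht)).symm)
      ((hf.intervalIntegrable ε 1).congr fun t ht => (hexplicit (uIoc_subset_uIcc ht)).symm),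
    integral_congr hvanish, integral_congr hexplicit, integral_div]
  simp

/-- Sharp estimate of the weighted Dirichlet-type integral of the derivative of
the (scaled) logarithmic cutoff profile:
`π ∫_0^1 t |η_ε'(t)|² dt ≤ π/|ln ε| + C/|ln ε|^{3/2}` for a universal `C`. -/
theorem stmt6 : ∃ C : ℝ, 0 < C ∧ ∀ ε : ℝ, ε ∈ Set.Ioo 0 (1 / 4 : ℝ) →
    Real.pi * ∫ t in (0 : ℝ)..1,
        t * ((if ε < t ∧ t < ε + Real.sqrt (1 - ε ^ 2) then
              -(1 / |Real.log ε|) * ((t - ε) / ((t - ε) ^ 2 + ε ^ 2))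
            else 0)) ^ 2
      ≤ Real.pi / |Real.log ε| + C / |Real.log ε| ^ ((3 : ℝ) / 2) := by
  refine ⟨π ^ 2 / 2, by positivity, fun ε ⟨hε0, hε⟩ => ?_⟩
  have hL := one_lt_abs_log_of_lt_quarter hε0 hε
  have hL32 : |log ε| ^ ((3 : ℝ) / 2) ≤ |log ε| ^ 2 := by
    rw [← rpow_two]
    exact rpow_le_rpow_of_exponent_le hL.le (by norm_num)
  change π * ∫ t in (0 : ℝ)..1, t * logCutoffDeriv ε t ^ 2 ≤ _
  rw [integral_mul_logCutoffDeriv_sq hε0 (by linarith)]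
  calc π * ((∫ t in ε..1, t * ((t - ε) / ((t - ε) ^ 2 + ε ^ 2)) ^ 2) / |log ε| ^ 2)
      ≤ π * ((|log ε| + π / 2) / |log ε| ^ 2) := by
        gcongr
        exact integral_mul_div_sq_add_sq_sq_le hε0 (by linarith)
    _ = π / |log ε| + π ^ 2 / 2 / |log ε| ^ 2 := by
        field_simp
    _ ≤ π / |log ε| + π ^ 2 / 2 / |log ε| ^ ((3 : ℝ) / 2) := by
        gcongr
end

section
/- Let ε ∈ (0,1/4) and η_ε the scaled logarithmic profile on ℝ with η_ε(t) = -(1/|ln ε|)·ln √((|t|-ε)² + ε²) for ε < |t| < ε + √(1-ε²), η_ε = 1 on [-ε,ε], η_ε = 0 elsewhere. Then ∫_ℝ η_ε(t)² dt ≤ C/|ln ε|² and ε·∫_ℝ |η_ε'(t)|² dt ≤ C/|ln ε|² for a universal constant C > 0. -/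
/-!
Since `η_ε` is even, both integrals are twice integrals over `(0, ∞)`. Put `u = t - ε`. On the
slope `|ln ε| η_ε = -ln √(u² + ε²) ≤ |ln u|`, and `(ln u)² ≤ 16 u^{-1/2}` on `(0, 1]`, so `η_ε²` is
dominated by `1` on the plateau plus `16 u^{-1/2} / |ln ε|²`; the plateau contributes
`2ε ≤ 8 / |ln ε|²` because `ε (ln ε)² < 4`. For the derivative,
`|ln ε|² η_ε'² = u² / (u² + ε²)² ≤ 1 / (u² + ε²)`, a Cauchy profile of total mass `π / ε`.
-/

open MeasureTheory Set Real Filter Topology ProbabilityTheory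

lemma integral_comp_abs_le {F g : ℝ → ℝ} (hF : ∀ s, 0 ≤ F s) (hg : Integrable g)
    (hg0 : ∀ s, 0 ≤ g s) (hFg : ∀ᵐ s, 0 < s → F s ≤ g s) :
    ∫ t, F |t| ≤ 2 * ∫ s, g s := by
  rw [integral_comp_abs]
  gcongr
  calc ∫ s in Ioi 0, F s ≤ ∫ s in Ioi 0, g s :=
        integral_mono_of_nonneg (ae_of_all _ hF) hg.integrableOn
          ((ae_restrict_iff' measurableSet_Ioi).2 (hFg.mono fun s h hs => h hs))
    _ ≤ ∫ s, g s := setIntegral_le_integral hg (ae_of_all _ hg0)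

lemma sq_deriv_comp_abs (f : ℝ → ℝ) {t : ℝ} (ht : t ≠ 0) :
    deriv (fun x => f |x|) t ^ 2 = deriv f |t| ^ 2 := by
  rcases ht.lt_or_gt with ht | ht
  · have : (fun x => f |x|) =ᶠ[𝓝 t] fun x => f (-x) :=
      (eventually_lt_nhds ht).mono fun x hx => by simp only [abs_of_neg hx]
    rw [this.deriv_eq, deriv_comp_neg, abs_of_neg ht, neg_sq]
  · have : (fun x => f |x|) =ᶠ[𝓝 t] f :=
      (eventually_gt_nhds ht).mono fun x hx => by simp only [abs_of_pos hx]
    rw [this.deriv_eq, abs_of_pos ht]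

lemma log_sq_mul_rpow_lt {x p : ℝ} (hx0 : 0 < x) (hx1 : x ≤ 1) (hp : 0 < p) :
    log x ^ 2 * x ^ p < 4 / p ^ 2 := by
  set y := x ^ (p / 2)
  have hy := abs_log_mul_self_lt y (rpow_pos_of_pos hx0 _)
    (rpow_le_one hx0.le hx1 (by positivity))
  rw [log_rpow hx0, ← sq_lt_one_iff_abs_lt_one] at hy
  have hy2 : y ^ 2 = x ^ p := by rw [← rpow_natCast, ← rpow_mul hx0.le]; norm_num
  rw [lt_div_iff₀ (by positivity), ← hy2]
  linarith [show log x ^ 2 * y ^ 2 * p ^ 2 = 4 * (p / 2 * log x * y) ^ 2 by ring]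

lemma integrable_inv_sub_sq_add_sq (a : ℝ) {c : ℝ} (hc : 0 < c) :
    Integrable fun s => ((s - a) ^ 2 + c ^ 2)⁻¹ := by
  refine ((integrable_cauchyPDFReal a (γ := c.toNNReal)).const_mul (π / c)).congr
    (ae_of_all _ fun s => ?_)
  simp only [cauchyPDFReal_def, Real.coe_toNNReal _ hc.le]
  field_simp [pi_pos.ne']

lemma integral_univ_inv_sub_sq_add_sq (a : ℝ) {c : ℝ} (hc : 0 < c) :
    ∫ s, ((s - a) ^ 2 + c ^ 2)⁻¹ = π / c := by
  have h := integral_cauchyPDFReal_eq_one a (γ := c.toNNReal) (by simpa using hc)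
  simp only [cauchyPDFReal_def, Real.coe_toNNReal _ hc.le, integral_const_mul] at h
  field_simp at h ⊢
  linarith

lemma integrableOn_Ioo_rpow_sub {a b r : ℝ} (hab : a ≤ b) (hr : -1 < r) :
    IntegrableOn (fun s => (s - a) ^ r) (Ioo a b) := by
  rw [← intervalIntegrable_iff_integrableOn_Ioo_of_le hab]
  simpa using (intervalIntegral.intervalIntegrable_rpow' hr (a := 0) (b := b - a)).comp_sub_right a

lemma setIntegral_Ioo_rpow_sub {a b r : ℝ} (hab : a ≤ b) (hr : -1 < r) :
    ∫ s in Ioo a b, (s - a) ^ r = (b - a) ^ (r + 1) / (r + 1) := by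
  rw [← integral_Ioc_eq_integral_Ioo, ← intervalIntegral.integral_of_le hab,
    intervalIntegral.integral_comp_sub_right (fun s => s ^ r), sub_self, integral_rpow (Or.inl hr),
    zero_rpow (by linarith), sub_zero]

/-- The profile in the radial variable: `η_ε t = logCutoff ε |t|`. -/
noncomputable def logCutoff (ε s : ℝ) : ℝ :=
  if s ≤ ε then 1
  else if s < ε + √(1 - ε ^ 2) then -(1 / |log ε|) * log √((s - ε) ^ 2 + ε ^ 2)
  else 0

noncomputable def logCutoffBound (ε : ℝ) : ℝ → ℝ :=
  (Icc 0 ε).indicator 1 +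
    (Ioo ε (ε + 1)).indicator fun s => 16 * (s - ε) ^ (-(1 / 2) : ℝ) / |log ε| ^ 2

lemma logCutoffBound_nonneg (ε s : ℝ) : 0 ≤ logCutoffBound ε s :=
  add_nonneg (indicator_nonneg (fun _ _ => zero_le_one) _) <| indicator_nonneg (fun x hx => by
    have := rpow_nonneg (sub_pos.2 hx.1).le (-(1 / 2) : ℝ); positivity) _

lemma sq_logCutoff_le_logCutoffBound (ε : ℝ) {s : ℝ} (hs : 0 < s) :
    logCutoff ε s ^ 2 ≤ logCutoffBound ε s := by
  rw [logCutoffBound, Pi.add_apply]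
  unfold logCutoff
  split_ifs with hcore hslope
  · rw [indicator_of_mem (mem_Icc.2 ⟨hs.le, hcore⟩), indicator_of_notMem fun h => by
      linarith [h.1]]
    simp
  · rw [not_le] at hcore
    have hu : 0 < s - ε := sub_pos.2 hcore
    have hsq : (s - ε) ^ 2 + ε ^ 2 < 1 := by
      have := (lt_sqrt hu.le).1 (by linarith : s - ε < √(1 - ε ^ 2)); linarith
    have hroot : s - ε ≤ √((s - ε) ^ 2 + ε ^ 2) := le_sqrt_of_sq_le (by nlinarith)
    have hlog : log (s - ε) ≤ log √((s - ε) ^ 2 + ε ^ 2) := log_le_log hu hroot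
    have hlog0 : log √((s - ε) ^ 2 + ε ^ 2) ≤ 0 := log_nonpos (sqrt_nonneg _) (sqrt_le_one.2 hsq.le)
    have hu1 : s - ε ≤ 1 := by nlinarith
    have hmain := log_sq_mul_rpow_lt hu hu1 one_half_pos
    rw [indicator_of_notMem (fun h => by linarith [h.2]), indicator_of_mem (mem_Ioo.2 ⟨hcore, by
      linarith [sqrt_le_one.2 (by nlinarith : 1 - ε ^ 2 ≤ 1)]⟩), zero_add,
      rpow_neg hu.le]
    calc (-(1 / |log ε|) * log √((s - ε) ^ 2 + ε ^ 2)) ^ 2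
        = log √((s - ε) ^ 2 + ε ^ 2) ^ 2 / |log ε| ^ 2 := by ring
      _ ≤ log (s - ε) ^ 2 / |log ε| ^ 2 := by
        apply div_le_div_of_nonneg_right _ (by positivity); nlinarith
      _ ≤ 16 * ((s - ε) ^ (1 / 2 : ℝ))⁻¹ / |log ε| ^ 2 := by
        gcongr
        rw [← div_eq_mul_inv, le_div_iff₀ (rpow_pos_of_pos hu _)]
        norm_num at hmain ⊢
        linarith
  · rw [zero_pow two_ne_zero]
    exact logCutoffBound_nonneg ε s

lemma sq_deriv_logCutoff_le (ε : ℝ) {s : ℝ} (hsε : s ≠ ε) (hsb : s ≠ ε + √(1 - ε ^ 2)) :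
    deriv (logCutoff ε) s ^ 2 ≤ ((s - ε) ^ 2 + ε ^ 2)⁻¹ / |log ε| ^ 2 := by
  set b := ε + √(1 - ε ^ 2)
  have hεb : ε ≤ b := le_add_of_nonneg_right (sqrt_nonneg _)
  rcases hsε.lt_or_gt with hcore | hcore
  · have : logCutoff ε =ᶠ[𝓝 s] fun _ => 1 :=
      (eventually_lt_nhds hcore).mono fun x hx => if_pos hx.le
    rw [this.deriv_eq, deriv_const, zero_pow two_ne_zero]
    positivity
  rcases hsb.lt_or_gt with hslope | hout
  · set u := s - ε
    have hX : 0 < u ^ 2 + ε ^ 2 := by have : 0 < u := sub_pos.2 hcore; positivity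
    have heq : logCutoff ε =ᶠ[𝓝 s] fun x => -(1 / |log ε|) * (log ((x - ε) ^ 2 + ε ^ 2) / 2) :=
      eventually_of_mem (Ioo_mem_nhds hcore hslope) fun x hx => by
        rw [logCutoff, if_neg (not_le.2 hx.1), if_pos hx.2, log_sqrt (by positivity)]
    have hd : HasDerivAt (fun x => -(1 / |log ε|) * (log ((x - ε) ^ 2 + ε ^ 2) / 2))
        (-(1 / |log ε|) * (2 * u / (u ^ 2 + ε ^ 2) / 2)) s := by
      have hX' : HasDerivAt (fun x => (x - ε) ^ 2 + ε ^ 2) (2 * u) s := by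
        simpa using (((hasDerivAt_id s).sub_const ε).pow 2).add_const (ε ^ 2)
      exact ((hX'.log hX.ne').div_const 2).const_mul _
    rw [heq.deriv_eq, hd.deriv]
    calc (-(1 / |log ε|) * (2 * u / (u ^ 2 + ε ^ 2) / 2)) ^ 2
        = u ^ 2 / (u ^ 2 + ε ^ 2) * (u ^ 2 + ε ^ 2)⁻¹ / |log ε| ^ 2 := by field_simp
      _ ≤ 1 * (u ^ 2 + ε ^ 2)⁻¹ / |log ε| ^ 2 := by
        gcongr
        exact div_le_one_of_le₀ (by nlinarith) hX.le
      _ = _ := by rw [one_mul]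
  · have : logCutoff ε =ᶠ[𝓝 s] fun _ => 0 :=
      (eventually_gt_nhds hout).mono fun x hx => by
        rw [logCutoff, if_neg (by linarith), if_neg (by linarith)]
    rw [this.deriv_eq, deriv_const, zero_pow two_ne_zero]
    positivity

lemma integral_logCutoffBound {ε : ℝ} (hε : 0 ≤ ε) :
    Integrable (logCutoffBound ε) ∧ ∫ s, logCutoffBound ε s = ε + 32 / |log ε| ^ 2 := by
  have hcore : Integrable ((Icc 0 ε).indicator (1 : ℝ → ℝ)) :=
    (integrable_indicator_iff measurableSet_Icc).2 (integrableOn_const measure_Icc_lt_top.ne)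
  have hslope : Integrable ((Ioo ε (ε + 1)).indicator
      fun s => 16 * (s - ε) ^ (-(1 / 2) : ℝ) / |log ε| ^ 2) :=
    (integrable_indicator_iff measurableSet_Ioo).2
      (((integrableOn_Ioo_rpow_sub (by linarith) (by norm_num)).const_mul 16).div_const _)
  refine ⟨hcore.add hslope, ?_⟩
  simp only [logCutoffBound, Pi.add_apply]
  rw [integral_add hcore hslope, integral_indicator_one measurableSet_Icc,
    integral_indicator measurableSet_Ioo, integral_div, integral_const_mul,
    setIntegral_Ioo_rpow_sub (by linarith) (by norm_num), Real.volume_real_Icc_of_le hε]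
  norm_num

lemma integral_sq_logCutoff_abs_le {ε : ℝ} (hε : 0 ≤ ε) :
    ∫ t, logCutoff ε |t| ^ 2 ≤ 2 * (ε + 32 / |log ε| ^ 2) := by
  obtain ⟨hint, hval⟩ := integral_logCutoffBound hε
  rw [← hval]
  exact integral_comp_abs_le (fun _ => sq_nonneg _) hint (logCutoffBound_nonneg ε)
    (ae_of_all _ fun _ => sq_logCutoff_le_logCutoffBound ε)

lemma integral_sq_deriv_logCutoff_abs_le {ε : ℝ} (hε : 0 < ε) :
    ∫ t, deriv (fun t => logCutoff ε |t|) t ^ 2 ≤ 2 * (π / ε / |log ε| ^ 2) := by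
  calc ∫ t, deriv (fun t => logCutoff ε |t|) t ^ 2
      = ∫ t, deriv (logCutoff ε) |t| ^ 2 :=
        integral_congr_ae ((Measure.ae_ne volume 0).mono fun t ht => sq_deriv_comp_abs _ ht)
    _ ≤ 2 * ∫ s, ((s - ε) ^ 2 + ε ^ 2)⁻¹ / |log ε| ^ 2 := by
      refine integral_comp_abs_le (fun _ => sq_nonneg _)
        ((integrable_inv_sub_sq_add_sq ε hε).div_const _) (fun _ => by positivity) ?_
      filter_upwards [Measure.ae_ne volume ε, Measure.ae_ne volume (ε + √(1 - ε ^ 2))]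
        with s hsε hsb _ using sq_deriv_logCutoff_le ε hsε hsb
    _ = 2 * (π / ε / |log ε| ^ 2) := by
      rw [integral_div, integral_univ_inv_sub_sq_add_sq ε hε]

/-- `L²` estimates for the scaled logarithmic cutoff profile `η_ε`:
`∫_ℝ η_ε² ≤ C/|ln ε|²` and `ε ∫_ℝ |η_ε'|² ≤ C/|ln ε|²` for a universal `C`. -/
theorem stmt7 : ∃ C : ℝ, 0 < C ∧ ∀ ε : ℝ, ε ∈ Set.Ioo 0 (1 / 4 : ℝ) →
    let η : ℝ → ℝ := fun t =>
      if |t| ≤ ε then 1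
      else if |t| < ε + Real.sqrt (1 - ε ^ 2) then
        -(1 / |Real.log ε|) * Real.log (Real.sqrt ((|t| - ε) ^ 2 + ε ^ 2))
      else 0
    (∫ t : ℝ, (η t) ^ 2) ≤ C / |Real.log ε| ^ 2 ∧
    ε * ∫ t : ℝ, (deriv η t) ^ 2 ≤ C / |Real.log ε| ^ 2 := by
  refine ⟨72, by norm_num, fun ε ⟨hε0, hε1⟩ => ?_⟩
  show ∫ t, logCutoff ε |t| ^ 2 ≤ _ ∧ ε * ∫ t, deriv (fun t => logCutoff ε |t|) t ^ 2 ≤ _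
  have hL0 : |log ε| ≠ 0 := abs_ne_zero.2 (log_neg hε0 (by linarith)).ne
  have hL : 0 < |log ε| ^ 2 := by positivity
  have hεL : ε * |log ε| ^ 2 < 4 := by
    simpa [mul_comm] using log_sq_mul_rpow_lt hε0 (by linarith) one_pos
  constructor
  · calc ∫ t, logCutoff ε |t| ^ 2 ≤ 2 * (ε + 32 / |log ε| ^ 2) :=
          integral_sq_logCutoff_abs_le hε0.le
      _ ≤ 72 / |log ε| ^ 2 := by
        rw [le_div_iff₀ hL]
        have : 2 * (ε + 32 / |log ε| ^ 2) * |log ε| ^ 2 = 2 * (ε * |log ε| ^ 2) + 64 := by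
          field_simp; ring
        linarith
  · calc ε * ∫ t, deriv (fun t => logCutoff ε |t|) t ^ 2 ≤ ε * (2 * (π / ε / |log ε| ^ 2)) := by
          gcongr; exact integral_sq_deriv_logCutoff_abs_le hε0
      _ = 2 * π / |log ε| ^ 2 := by field_simp
      _ ≤ 72 / |log ε| ^ 2 := by gcongr; linarith [pi_lt_four]
end

section
/- Let β ∈ (0,1], ε ∈ (0,β), and define ũ_ε(t) = sin((π/2)·arcsin(tanh(t/ε))/arcsin(tanh(β/ε))) for |t| ≤ β and ũ_ε(t) = sign(t) for |t| ≥ β, with ṽ_ε = √(1 - ũ_ε²). Then there exist universal constants C, c₀ > 0 such that for all t ∈ ℝ: |sign(t) - ũ_ε(t)| + |ṽ_ε(t)| ≤ C·e^{-c₀|t|/ε}. -/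
/-! `arcsin ∘ tanh` is the Gudermannian function, and `π/2 - arcsin (tanh x) = arcsin (1 / cosh x)`
is at most `π e^{-x}` by Jordan's inequality. For `0 < t ≤ β` the profile is `sin θ` with
`π/2 - θ = (π/2) (g(β/ε) - g(t/ε)) / g(β/ε)`, `g = arcsin ∘ tanh`: the numerator is `O(e^{-t/ε})`,
the denominator is bounded below because `β/ε ≥ 1`, and both `1 - sin θ` and `|cos θ|` are at most
`|π/2 - θ|`. The profile is odd, which handles `t < 0`. -/

open Real

theorem Real.sqrt_one_sub_tanh_sq (x : ℝ) : √(1 - tanh x ^ 2) = (cosh x)⁻¹ := by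
  have hc : cosh x ≠ 0 := (cosh_pos x).ne'
  rw [tanh_eq_sinh_div_cosh, div_pow, one_sub_div (pow_ne_zero 2 hc), cosh_sq_sub_sinh_sq,
    one_div, sqrt_inv, sqrt_sq (cosh_pos x).le]

theorem Real.inv_cosh_le_two_mul_exp_neg (x : ℝ) : (cosh x)⁻¹ ≤ 2 * exp (-x) := by
  have h : exp x / 2 ≤ cosh x := by rw [cosh_eq]; linarith [exp_pos (-x)]
  calc (cosh x)⁻¹ ≤ (exp x / 2)⁻¹ := inv_anti₀ (by positivity) h
    _ = 2 * exp (-x) := by rw [inv_div, exp_neg, div_eq_mul_inv]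

theorem Real.pi_div_two_sub_arcsin_tanh_le (x : ℝ) : π / 2 - arcsin (tanh x) ≤ π * exp (-x) := by
  rcases lt_or_ge x 0 with hx | hx
  · have : 1 ≤ exp (-x) := one_le_exp (by linarith)
    nlinarith [neg_pi_div_two_le_arcsin (tanh x), pi_pos]
  set φ := π / 2 - arcsin (tanh x) with hφ
  have hφ0 : 0 ≤ φ := sub_nonneg.2 (arcsin_le_pi_div_two _)
  have hφπ : φ ≤ π / 2 := by
    have : 0 ≤ tanh x := by
      rw [tanh_eq_sinh_div_cosh]; exact div_nonneg (sinh_nonneg_iff.2 hx) (cosh_pos x).le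
    linarith [arcsin_nonneg.2 this]
  have hsin : sin φ = (cosh x)⁻¹ := by
    rw [sin_pi_div_two_sub, cos_arcsin, sqrt_one_sub_tanh_sq]
  have := (mul_le_sin hφ0 hφπ).trans (hsin ▸ inv_cosh_le_two_mul_exp_neg x)
  calc φ = π / 2 * (2 / π * φ) := by field_simp
    _ ≤ π / 2 * (2 * exp (-x)) := by gcongr
    _ = π * exp (-x) := by ring

theorem Real.abs_arcsin_tanh_sub_le {x y : ℝ} (hxy : x ≤ y) :
    |arcsin (tanh y) - arcsin (tanh x)| ≤ π * exp (-x) := by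
  have hy : π / 2 - arcsin (tanh y) ≤ π * exp (-x) :=
    (pi_div_two_sub_arcsin_tanh_le y).trans (by gcongr)
  rw [abs_le]
  constructor
  · linarith [arcsin_le_pi_div_two (tanh x)]
  · linarith [pi_div_two_sub_arcsin_tanh_le x, arcsin_le_pi_div_two (tanh y)]

theorem Real.pi_div_eight_le_arcsin_tanh {x : ℝ} (hx : 1 ≤ x) : π / 8 ≤ arcsin (tanh x) := by
  have he : exp (-x) ≤ 3 / 8 := by
    calc exp (-x) ≤ exp (-1) := by gcongr
      _ = (exp 1)⁻¹ := exp_neg 1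
      _ ≤ 3 / 8 := by
        rw [inv_le_comm₀ (exp_pos 1) (by norm_num)]; linarith [exp_one_gt_d9]
  nlinarith [pi_div_two_sub_arcsin_tanh_le x, pi_pos]

theorem Real.abs_one_sub_sin_add_sqrt_le (θ : ℝ) :
    |1 - sin θ| + √(1 - sin θ ^ 2) ≤ 2 * |π / 2 - θ| := by
  have hs := abs_sin_sub_sin_le (π / 2) θ
  have hc := abs_cos_sub_cos_le θ (π / 2)
  rw [sin_pi_div_two] at hs
  rw [cos_pi_div_two, sub_zero, abs_cos_eq_sqrt_one_sub_sin_sq, abs_sub_comm] at hc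
  linarith

noncomputable def transitionProfile (β ε t : ℝ) : ℝ :=
  if |t| ≤ β then sin (π / 2 * arcsin (tanh (t / ε)) / arcsin (tanh (β / ε))) else sign t

theorem transitionProfile_neg (β ε t : ℝ) :
    transitionProfile β ε (-t) = -transitionProfile β ε t := by
  unfold transitionProfile
  rw [abs_neg]
  split_ifs
  · rw [neg_div, tanh_neg, arcsin_neg, mul_neg, neg_div, sin_neg]
  · exact sign_neg

theorem abs_sign_sub_transitionProfile_add_le_of_nonneg {β ε t : ℝ} (hε : 0 < ε) (hεβ : ε ≤ β)
    (ht : 0 ≤ t) :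
    |sign t - transitionProfile β ε t| + |√(1 - transitionProfile β ε t ^ 2)| ≤
      8 * π * exp (-t / ε) := by
  rcases ht.eq_or_lt with rfl | ht
  · simpa [transitionProfile, (hε.trans_le hεβ).le] using
      (by nlinarith [pi_gt_three] : (1 : ℝ) ≤ 8 * π)
  rw [sign_of_pos ht, abs_of_nonneg (sqrt_nonneg _)]
  by_cases htβ : t ≤ β
  · set a := arcsin (tanh (β / ε))
    set g := arcsin (tanh (t / ε))
    have ha : π / 8 ≤ a := pi_div_eight_le_arcsin_tanh ((one_le_div hε).2 hεβ)
    have ha0 : 0 < a := by linarith [pi_pos]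
    have hag : |a - g| ≤ π * exp (-(t / ε)) := abs_arcsin_tanh_sub_le (by gcongr)
    have hθ : π / 2 - π / 2 * g / a = π / 2 * (a - g) / a := by field_simp
    rw [transitionProfile, if_pos ((abs_of_pos ht).trans_le htβ)]
    calc _ ≤ 2 * |π / 2 - π / 2 * g / a| := abs_one_sub_sin_add_sqrt_le _
      _ = π * |a - g| / a := by
        rw [hθ, abs_div, abs_mul, abs_of_pos (by positivity : 0 < π / 2), abs_of_pos ha0]
        ring
      _ ≤ 8 * |a - g| := by
        rw [div_le_iff₀ ha0]; nlinarith [abs_nonneg (a - g)]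
      _ ≤ 8 * (π * exp (-(t / ε))) := by gcongr
      _ = 8 * π * exp (-t / ε) := by rw [neg_div]; ring
  · simp only [transitionProfile, abs_of_pos ht, htβ, if_false, sign_of_pos ht, sub_self, abs_zero,
      one_pow, sqrt_zero, add_zero]
    positivity

theorem abs_sign_sub_transitionProfile_add_le {β ε : ℝ} (hε : 0 < ε) (hεβ : ε ≤ β) (t : ℝ) :
    |sign t - transitionProfile β ε t| + |√(1 - transitionProfile β ε t ^ 2)| ≤
      8 * π * exp (-|t| / ε) := by
  rcases le_or_gt 0 t with ht | ht
  · rw [abs_of_nonneg ht]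
    exact abs_sign_sub_transitionProfile_add_le_of_nonneg hε hεβ ht
  · have h := abs_sign_sub_transitionProfile_add_le_of_nonneg hε hεβ (neg_nonneg.2 ht.le)
    rwa [transitionProfile_neg, sign_neg, neg_sq, ← neg_add', abs_neg, ← abs_of_neg ht] at h

/-- Exponential decay of the one-dimensional transition profile: there are
universal `C, c₀ > 0` such that for `β ∈ (0,1]`, `ε ∈ (0,β)`, the profile
`ũ_ε` (and `ṽ_ε = √(1-ũ_ε²)`) satisfies
`|sign(t) - ũ_ε(t)| + |ṽ_ε(t)| ≤ C·e^{-c₀|t|/ε}` for all `t`. -/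
theorem stmt16 : ∃ C c₀ : ℝ, 0 < C ∧ 0 < c₀ ∧
    ∀ β ε : ℝ, β ∈ Set.Ioc (0 : ℝ) 1 → ε ∈ Set.Ioo 0 β →
    let u : ℝ → ℝ := fun t =>
      if |t| ≤ β then
        Real.sin ((Real.pi / 2) * Real.arcsin (Real.tanh (t / ε)) /
          Real.arcsin (Real.tanh (β / ε)))
      else Real.sign t
    let v : ℝ → ℝ := fun t => Real.sqrt (1 - (u t) ^ 2)
    ∀ t : ℝ, |Real.sign t - u t| + |v t| ≤ C * Real.exp (-c₀ * |t| / ε) := by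
  refine ⟨8 * π, 1, by positivity, one_pos, ?_⟩
  rintro β ε - ⟨hε, hεβ⟩ u v t
  rw [neg_mul, one_mul]
  exact abs_sign_sub_transitionProfile_add_le hε hεβ.le t
end
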